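/- Let E be a monotonically complete Banach lattice with the Fatou property, (T_i)_{i∈I} a commuting family of positive linear contractions on E, and g ∈ E a super fixed point of the family (i.e., T_i g ≥ g for all i). Then there exists a smallest fixed vector f of the family with g ≤ f; moreover, if g ≥ 0, then ‖f‖ = ‖g‖. -/

import Mathlib

/-! Zorn's lemma on sets of super fixed points that every `T i` maps into themselves: a maximal
element `m` is a common fixed point since `m ≤ T i m`. Monotonicity and commutation keep super
fixed points super fixed, and chains have suprema by monotone completeness. The super fixed points
`x ≥ g⁺` with `‖x‖ ≤ ‖g⁺‖` (closed under suprema of chains by the Fatou property) give a fixed point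
`f₀ ≥ g` with `‖f₀‖ ≤ ‖g⁺‖`. The super fixed points `x ≥ g` below every fixed point above `g`
(chains are order bounded by `f₀`, hence norm bounded after shifting by `g`) give the smallest
one, whose norm lies between `‖g‖` and `‖f₀‖` when `g ≥ 0`. -/

theorem exists_forall_apply_eq_of_chain_bounded {α I : Type*} [PartialOrder α]
    (T : I → α → α) {S : Set α} (hle : ∀ x ∈ S, ∀ i, x ≤ T i x) (hmaps : ∀ i, Set.MapsTo (T i) S S)
    (hchain : ∀ c ⊆ S, IsChain (· ≤ ·) c → c.Nonempty → ∃ ub ∈ S, ∀ z ∈ c, z ≤ ub)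
    {x : α} (hx : x ∈ S) : ∃ f ∈ S, x ≤ f ∧ ∀ i, T i f = f := by
  obtain ⟨m, hxm, hmS, hmax⟩ :=
    zorn_le_nonempty₀ S (fun c hcS hc y hy => hchain c hcS hc ⟨y, hy⟩) x hx
  exact ⟨m, hmS, hxm, fun i => (hmax (hmaps i hmS) (hle m hmS i)).antisymm (hle m hmS i)⟩

theorem IsLUB.le_apply_of_forall_le_apply {α : Type*} [Preorder α] {φ : α → α}
    (hφ : Monotone φ) {c : Set α} {b : α} (hb : IsLUB c b) (hc : ∀ x ∈ c, x ≤ φ x) : b ≤ φ b :=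
  hb.2 fun x hx => (hc x hx).trans (hφ (hb.1 hx))

theorem le_apply_of_commute {α : Type*} [Preorder α] {φ ψ : α → α} (hψ : Monotone ψ)
    (hcomm : Function.Commute φ ψ) {x : α} (hx : x ≤ φ x) : ψ x ≤ φ (ψ x) :=
  (hcomm x).symm ▸ hψ hx

section BanachLattice

variable {E : Type*} [NormedAddCommGroup E] [Lattice E]

def MonotonicallyComplete (E : Type*) [NormedAddCommGroup E] [Lattice E] : Prop :=
  ∀ D : Set E, D.Nonempty → DirectedOn (· ≤ ·) D → (∀ x ∈ D, 0 ≤ x) →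
    (∃ C : ℝ, ∀ x ∈ D, ‖x‖ ≤ C) → ∃ b : E, IsLUB D b

def HasFatouProperty (E : Type*) [NormedAddCommGroup E] [Lattice E] : Prop :=
  ∀ (D : Set E) (b : E), D.Nonempty → DirectedOn (· ≤ ·) D →
    (∀ x ∈ D, 0 ≤ x) → IsLUB D b → ‖b‖ = ⨆ x : D, ‖(x : E)‖

theorem HasFatouProperty.norm_le {D : Set E} {b : E} {r : ℝ} (hfatou : HasFatouProperty E)
    (hne : D.Nonempty) (hdir : DirectedOn (· ≤ ·) D) (hpos : ∀ x ∈ D, 0 ≤ x) (hb : IsLUB D b)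
    (hr : ∀ x ∈ D, ‖x‖ ≤ r) : ‖b‖ ≤ r := by
  have : Nonempty D := hne.to_subtype
  rw [hfatou D b hne hdir hpos hb]
  exact ciSup_le fun x => hr x x.2

variable {I : Type*} {T : I → E → E}

theorem exists_forall_apply_eq_ge_norm_le (hmc : MonotonicallyComplete E)
    (hfatou : HasFatouProperty E) (hmono : ∀ i, Monotone (T i))
    (hcomm : ∀ i j, Function.Commute (T i) (T j)) (hnorm : ∀ i x, ‖T i x‖ ≤ ‖x‖)
    {u : E} (hu0 : 0 ≤ u) (hu : ∀ i, u ≤ T i u) :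
    ∃ f, (∀ i, T i f = f) ∧ u ≤ f ∧ ‖f‖ ≤ ‖u‖ := by
  let S := {x | u ≤ x ∧ (∀ i, x ≤ T i x) ∧ ‖x‖ ≤ ‖u‖}
  have hmaps (i : I) : Set.MapsTo (T i) S S := fun x ⟨hux, hx, hxu⟩ =>
    ⟨hux.trans (hx i), fun j => le_apply_of_commute (hmono i) (hcomm j i) (hx j),
      (hnorm i x).trans hxu⟩
  have hchain (c) (hcS : c ⊆ S) (hc : IsChain (· ≤ ·) c) (hne : c.Nonempty) :
      ∃ ub ∈ S, ∀ z ∈ c, z ≤ ub := by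
    have hpos : ∀ x ∈ c, 0 ≤ x := fun x hx => hu0.trans (hcS hx).1
    obtain ⟨b, hb⟩ := hmc c hne hc.directedOn hpos ⟨‖u‖, fun x hx => (hcS hx).2.2⟩
    obtain ⟨y, hy⟩ := hne
    exact ⟨b, ⟨(hcS hy).1.trans (hb.1 hy),
      fun i => hb.le_apply_of_forall_le_apply (hmono i) fun x hx => (hcS hx).2.1 i,
      hfatou.norm_le ⟨y, hy⟩ hc.directedOn hpos hb fun x hx => (hcS hx).2.2⟩, hb.1⟩
  obtain ⟨f, hfS, -, hf⟩ := exists_forall_apply_eq_of_chain_bounded T (fun x hx => hx.2.1) hmaps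
    hchain (x := u) ⟨le_rfl, hu, le_rfl⟩
  exact ⟨f, hf, hfS.1, hfS.2.2⟩

variable [IsOrderedAddMonoid E]

theorem MonotonicallyComplete.exists_isLUB_of_le {D : Set E} {a : E}
    (hmc : MonotonicallyComplete E) (hne : D.Nonempty) (hdir : DirectedOn (· ≤ ·) D)
    (ha : ∀ x ∈ D, a ≤ x) (hbdd : ∃ C : ℝ, ∀ x ∈ D, ‖x - a‖ ≤ C) : ∃ b, IsLUB D b := by
  let shift := OrderIso.subRight a
  have hdir' : DirectedOn (· ≤ ·) (shift '' D) := hdir.mono_comp shift.monotone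
  obtain ⟨b, hb⟩ := hmc (shift '' D) (hne.image _) hdir'
    (by rintro _ ⟨x, hx, rfl⟩; exact sub_nonneg.2 (ha x hx))
    (by obtain ⟨C, hC⟩ := hbdd; exact ⟨C, by rintro _ ⟨x, hx, rfl⟩; exact hC x hx⟩)
  exact ⟨_, shift.isLUB_image.1 hb⟩

theorem norm_le_norm_of_nonneg_of_le [HasSolidNorm E] {a b : E} (ha : 0 ≤ a) (hab : a ≤ b) :
    ‖a‖ ≤ ‖b‖ :=
  norm_le_norm_of_abs_le_abs (abs_le_abs_of_nonneg ha hab)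

theorem exists_isLeast_forall_apply_eq_ge [HasSolidNorm E] (hmc : MonotonicallyComplete E)
    (hmono : ∀ i, Monotone (T i)) (hcomm : ∀ i j, Function.Commute (T i) (T j))
    {g f₀ : E} (hg : ∀ i, g ≤ T i g) (hf₀ : ∀ i, T i f₀ = f₀) (hgf₀ : g ≤ f₀) :
    ∃ f, IsLeast {h | (∀ i, T i h = h) ∧ g ≤ h} f := by
  let F := {h | (∀ i, T i h = h) ∧ g ≤ h}
  let S := {x | g ≤ x ∧ (∀ i, x ≤ T i x) ∧ x ∈ lowerBounds F}
  have hmaps (i : I) : Set.MapsTo (T i) S S := fun x ⟨hgx, hx, hxF⟩ =>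
    ⟨hgx.trans (hx i), fun j => le_apply_of_commute (hmono i) (hcomm j i) (hx j),
      fun h hh => (hmono i (hxF hh)).trans_eq (hh.1 i)⟩
  have hchain (c) (hcS : c ⊆ S) (hc : IsChain (· ≤ ·) c) (hne : c.Nonempty) :
      ∃ ub ∈ S, ∀ z ∈ c, z ≤ ub := by
    have hbdd : ∀ x ∈ c, ‖x - g‖ ≤ ‖f₀ - g‖ := fun x hx =>
      norm_le_norm_of_nonneg_of_le (sub_nonneg.2 (hcS hx).1)
        (sub_le_sub_right ((hcS hx).2.2 ⟨hf₀, hgf₀⟩) g)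
    obtain ⟨b, hb⟩ := hmc.exists_isLUB_of_le hne hc.directedOn (fun x hx => (hcS hx).1) ⟨_, hbdd⟩
    obtain ⟨y, hy⟩ := hne
    exact ⟨b, ⟨(hcS hy).1.trans (hb.1 hy),
      fun i => hb.le_apply_of_forall_le_apply (hmono i) fun x hx => (hcS hx).2.1 i,
      fun h hh => hb.2 fun x hx => (hcS hx).2.2 hh⟩, hb.1⟩
  obtain ⟨f, hfS, -, hf⟩ := exists_forall_apply_eq_of_chain_bounded T (fun x hx => hx.2.1) hmaps
    hchain (x := g) ⟨le_rfl, hg, fun _ hh => hh.2⟩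
  exact ⟨f, ⟨hf, hfS.1⟩, hfS.2.2⟩

end BanachLattice

theorem smallest_fixed_vector_above_super_fixed_point_general
    {E : Type*} [NormedAddCommGroup E] [Lattice E] [HasSolidNorm E]
    [IsOrderedAddMonoid E] [NormedSpace ℝ E]
    (hmc : ∀ D : Set E, D.Nonempty → DirectedOn (· ≤ ·) D → (∀ x ∈ D, 0 ≤ x) →
      (∃ C : ℝ, ∀ x ∈ D, ‖x‖ ≤ C) → ∃ b : E, IsLUB D b)
    (hfatou : ∀ (D : Set E) (b : E), D.Nonempty → DirectedOn (· ≤ ·) D →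
      (∀ x ∈ D, 0 ≤ x) → IsLUB D b → ‖b‖ = ⨆ x : D, ‖(x : E)‖)
    {I : Type*} (T : I → E →L[ℝ] E)
    (hpos : ∀ i, ∀ x : E, 0 ≤ x → 0 ≤ T i x) (hcontr : ∀ i, ‖T i‖ ≤ 1)
    (hcomm : ∀ i j, (T i).comp (T j) = (T j).comp (T i))
    (g : E) (hg : ∀ i, g ≤ T i g) :
    ∃ f : E, IsLeast {h : E | (∀ i, T i h = h) ∧ g ≤ h} f ∧
      (0 ≤ g → ‖f‖ = ‖g‖) := by
  have hmono (i : I) : Monotone (T i) :=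
    OrderHomClass.mono (PositiveLinearMap.mk₀ (T i).toLinearMap (hpos i))
  have hcomm' (i j : I) : Function.Commute (T i) (T j) := fun x => congr($(hcomm i j) x)
  have hnorm (i : I) (x : E) : ‖T i x‖ ≤ ‖x‖ :=
    ((T i).le_of_opNorm_le (hcontr i) x).trans_eq (one_mul _)
  have hg_pos_super (i : I) : g⁺ ≤ T i g⁺ :=
    sup_le ((hg i).trans (hmono i le_sup_left)) (hpos i _ (posPart_nonneg g))
  obtain ⟨f₀, hf₀, hg_pos_f₀, hf₀g⟩ := exists_forall_apply_eq_ge_norm_le hmc hfatou hmono hcomm'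
    hnorm (posPart_nonneg g) hg_pos_super
  have hgf₀ : g ≤ f₀ := (le_posPart g).trans hg_pos_f₀
  obtain ⟨f, hf⟩ := exists_isLeast_forall_apply_eq_ge hmc hmono hcomm' hg hf₀ hgf₀
  refine ⟨f, hf, fun hg0 => le_antisymm ?_ (norm_le_norm_of_nonneg_of_le hg0 hf.1.2)⟩
  calc ‖f‖ ≤ ‖f₀‖ :=
        norm_le_norm_of_nonneg_of_le (hg0.trans hf.1.2) (hf.2 ⟨hf₀, hgf₀⟩)
    _ ≤ ‖g⁺‖ := hf₀g
    _ = ‖g‖ := by rw [posPart_eq_self.2 hg0]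

/-- Remark (e): if `g` is a super fixed point of a commuting family of positive
linear contractions on a monotonically complete Banach lattice with the Fatou
property, then there is a smallest common fixed vector `f` with `g ≤ f`; moreover
`‖f‖ = ‖g‖` whenever `g ≥ 0`. -/
theorem smallest_fixed_vector_above_super_fixed_point
    {E : Type*} [NormedAddCommGroup E] [Lattice E] [HasSolidNorm E]
    [IsOrderedAddMonoid E] [NormedSpace ℝ E] [CompleteSpace E]
    (hmc : ∀ D : Set E, D.Nonempty → DirectedOn (· ≤ ·) D → (∀ x ∈ D, 0 ≤ x) →
      (∃ C : ℝ, ∀ x ∈ D, ‖x‖ ≤ C) → ∃ b : E, IsLUB D b)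
    (hfatou : ∀ (D : Set E) (b : E), D.Nonempty → DirectedOn (· ≤ ·) D →
      (∀ x ∈ D, 0 ≤ x) → IsLUB D b → ‖b‖ = ⨆ x : D, ‖(x : E)‖)
    {I : Type*} (T : I → E →L[ℝ] E)
    (hpos : ∀ i, ∀ x : E, 0 ≤ x → 0 ≤ T i x) (hcontr : ∀ i, ‖T i‖ ≤ 1)
    (hcomm : ∀ i j, (T i).comp (T j) = (T j).comp (T i))
    (g : E) (hg : ∀ i, g ≤ T i g) :
    ∃ f : E, IsLeast {h : E | (∀ i, T i h = h) ∧ g ≤ h} f ∧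
      (0 ≤ g → ‖f‖ = ‖g‖) :=
  smallest_fixed_vector_above_super_fixed_point_general hmc hfatou T hpos hcontr hcomm g hg
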